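/- arXiv:2411.18864 — 6 statements merged into one kernel-verified Lean document; each statement's English description precedes it below -/
import Mathlib

section
/- Given two Gaussian possibility functions N̄(μ, Σ) and N̄(μ̃, Σ̃) on ℝⁿ with Σ, Σ̃ positive definite, the affine map M(x) = μ̃ + T(x - μ) with T = Σ̃^{1/2}(Σ^{1/2})⁻¹ (Cholesky factors) pushes N̄(μ, Σ) forward to N̄(μ̃, Σ̃); i.e., for all z, sup{exp(-(1/2)(x-μ)ᵀΣ⁻¹(x-μ)) : M(x) = z} = exp(-(1/2)(z-μ̃)ᵀΣ̃⁻¹(z-μ̃)). -/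
/-
The transport map is affine and invertible, so every fibre is a single point and the supremum
over the fibre of `z` is the value of `N̄(μ, Σ)` at that point `x = μ + L Lt⁻¹ (z - μt)`. Writing
`Σ = L Lᵀ` and `Σ̃ = Lt Ltᵀ`, the quadratic form `(x - μ)ᵀ Σ⁻¹ (x - μ)` pulls back along
`L Lt⁻¹` to `(z - μt)ᵀ Σ̃⁻¹ (z - μt)`, because `(L Lt⁻¹)ᵀ (L Lᵀ)⁻¹ (L Lt⁻¹) = (Lt Ltᵀ)⁻¹`.
-/

open Matrix

/-- The Gaussian possibility function on ℝⁿ with parameters μ and Σ. -/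
noncomputable def gaussPoss {n : ℕ} (μ : Fin n → ℝ) (S : Matrix (Fin n) (Fin n) ℝ)
    (θ : Fin n → ℝ) : ℝ :=
  Real.exp (-(1/2) * ((θ - μ) ⬝ᵥ (S⁻¹ *ᵥ (θ - μ))))

-- `⨆` over an empty index is `0` in `ℝ`, so `f a` must be nonnegative.
theorem Real.biSup_singleton_of_nonneg {α : Type*} {f : α → ℝ} {a : α} (ha : 0 ≤ f a) :
    ⨆ x ∈ ({a} : Set α), f x = f a := by
  have hfiber : ∀ x, ⨆ _ : x ∈ ({a} : Set α), f x ≤ f a := fun x ↦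
    Real.iSup_le (fun hx ↦ (congrArg f (Set.mem_singleton_iff.1 hx)).le) ha
  refine le_antisymm (Real.iSup_le hfiber ha) ?_
  refine le_ciSup_of_le ⟨f a, Set.forall_mem_range.2 hfiber⟩ a ?_
  rw [ciSup_pos (Set.mem_singleton a)]

theorem Matrix.setOf_add_mulVec_sub_eq {m R : Type*} [Fintype m] [DecidableEq m] [CommRing R]
    {A : Matrix m m R} (hA : IsUnit A.det) (a b z : m → R) :
    {x | b + A *ᵥ (x - a) = z} = {a + A⁻¹ *ᵥ (z - b)} := by
  ext x
  simp only [Set.mem_ofPred_eq, Set.mem_singleton_iff]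
  constructor
  · rintro rfl
    rw [add_sub_cancel_left, mulVec_mulVec, nonsing_inv_mul _ hA, one_mulVec,
      add_sub_cancel]
  · rintro rfl
    rw [add_sub_cancel_left, mulVec_mulVec, mul_nonsing_inv _ hA, one_mulVec,
      add_sub_cancel]

theorem Matrix.isUnit_det_of_mul_transpose_eq {m R : Type*} [Fintype m] [DecidableEq m]
    [CommRing R] {L S : Matrix m m R} (hL : L * Lᵀ = S) (hS : IsUnit S.det) : IsUnit L.det :=
  have hprod : IsUnit (L.det * Lᵀ.det) := by rwa [← det_mul, hL]
  isUnit_of_mul_isUnit_left hprod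

theorem Matrix.mulVec_dotProduct_mulVec_mulVec {m R : Type*} [Fintype m] [CommSemiring R]
    (A B : Matrix m m R) (v : m → R) :
    A *ᵥ v ⬝ᵥ (B *ᵥ (A *ᵥ v)) = v ⬝ᵥ ((Aᵀ * B * A) *ᵥ v) := by
  rw [← mulVec_mulVec, ← mulVec_mulVec, dotProduct_mulVec v Aᵀ, vecMul_transpose]

theorem Matrix.inv_mul_transpose_pullback {m R : Type*} [Fintype m] [DecidableEq m]
    [CommRing R] {L Lt : Matrix m m R} (hL : IsUnit L.det) :
    (L * Lt⁻¹)ᵀ * (L * Lᵀ)⁻¹ * (L * Lt⁻¹) = (Lt * Ltᵀ)⁻¹ := by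
  have hLT : IsUnit Lᵀ.det := by rwa [det_transpose]
  rw [transpose_mul, transpose_nonsing_inv, Matrix.mul_inv_rev, Matrix.mul_inv_rev]
  simp only [Matrix.mul_assoc, mul_nonsing_inv_cancel_left _ _ hLT,
    nonsing_inv_mul_cancel_left _ _ hL]

theorem gaussPoss_add_mulVec {n : ℕ} (μ μt : Fin n → ℝ) {S St A : Matrix (Fin n) (Fin n) ℝ}
    (hA : Aᵀ * S⁻¹ * A = St⁻¹) (z : Fin n → ℝ) :
    gaussPoss μ S (μ + A *ᵥ (z - μt)) = gaussPoss μt St z := by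
  rw [gaussPoss, gaussPoss, add_sub_cancel_left, mulVec_dotProduct_mulVec_mulVec, hA]

theorem gaussPoss_transport_map_general {n : ℕ} (μ μt : Fin n → ℝ)
    (S St L Lt : Matrix (Fin n) (Fin n) ℝ)
    (hS : S.PosDef) (hSt : St.PosDef)
    (hL : L * Lᵀ = S)
    (hLt : Lt * Ltᵀ = St) :
    ∀ z : Fin n → ℝ,
      (⨆ x ∈ {x : Fin n → ℝ | μt + (Lt * L⁻¹) *ᵥ (x - μ) = z}, gaussPoss μ S x)
        = gaussPoss μt St z := by
  intro z
  have hLdet : IsUnit L.det := isUnit_det_of_mul_transpose_eq hL hS.det_pos.ne'.isUnit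
  have hLtdet : IsUnit Lt.det := isUnit_det_of_mul_transpose_eq hLt hSt.det_pos.ne'.isUnit
  have hTdet : IsUnit (Lt * L⁻¹).det := by
    rw [det_mul]
    exact hLtdet.mul ((isUnit_nonsing_inv_det_iff).2 hLdet)
  have hTinv : (Lt * L⁻¹)⁻¹ = L * Lt⁻¹ := by
    rw [Matrix.mul_inv_rev, nonsing_inv_nonsing_inv _ hLdet]
  rw [setOf_add_mulVec_sub_eq hTdet,
    Real.biSup_singleton_of_nonneg (f := gaussPoss μ S) (Real.exp_nonneg _), hTinv,
    gaussPoss_add_mulVec μ μt]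
  rw [← hL, ← hLt]
  exact inv_mul_transpose_pullback hLdet

/-- the affine map M(x) = μ̃ + T(x - μ), with T = Σ̃^{1/2}(Σ^{1/2})⁻¹ built from
Cholesky factors, pushes N̄(μ, Σ) forward to N̄(μ̃, Σ̃). -/
theorem gaussPoss_transport_map {n : ℕ} (μ μt : Fin n → ℝ)
    (S St L Lt : Matrix (Fin n) (Fin n) ℝ)
    (hS : S.PosDef) (hSt : St.PosDef)
    -- L is the Cholesky factor of S: lower triangular, positive diagonal, S = L Lᵀ
    (hLlow : ∀ i j : Fin n, i < j → L i j = 0) (hLdiag : ∀ i : Fin n, 0 < L i i)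
    (hL : L * Lᵀ = S)
    -- Lt is the Cholesky factor of St
    (hLtlow : ∀ i j : Fin n, i < j → Lt i j = 0) (hLtdiag : ∀ i : Fin n, 0 < Lt i i)
    (hLt : Lt * Ltᵀ = St) :
    ∀ z : Fin n → ℝ,
      (⨆ x ∈ {x : Fin n → ℝ | μt + (Lt * L⁻¹) *ᵥ (x - μ) = z}, gaussPoss μ S x)
        = gaussPoss μt St z :=
  gaussPoss_transport_map_general μ μt S St L Lt hS hSt hL hLt
end

section
/- The Gaussian possibility function is conjugate for the Gaussian likelihood: if the prior is N̄(θ; μ, P) and the likelihood is p(y|θ) = N(y; θ, Σ) (a Gaussian probability density in y with mean θ and covariance Σ, both P and Σ positive definite), then the possibilistic posterior f(θ|y) ∝ p(y|θ)N̄(θ; μ, P), renormalized so its supremum is 1, equals N̄(θ; μ̂, P̂) with P̂ = (P⁻¹ + Σ⁻¹)⁻¹ and μ̂ = P̂(P⁻¹μ + Σ⁻¹y). -/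
open Matrix

/-- The Gaussian probability density on ℝⁿ with mean m and covariance Σ. -/
noncomputable def gaussPdf {n : ℕ} (m : Fin n → ℝ) (S : Matrix (Fin n) (Fin n) ℝ)
    (y : Fin n → ℝ) : ℝ :=
  (2 * Real.pi) ^ (-(n : ℝ) / 2) * (S.det) ^ (-(1 : ℝ) / 2) *
    Real.exp (-(1/2) * ((y - m) ⬝ᵥ (S⁻¹ *ᵥ (y - m))))

private lemma symm_dot {n : ℕ} {A : Matrix (Fin n) (Fin n) ℝ} (hA : Aᵀ = A)
    (x v : Fin n → ℝ) : x ⬝ᵥ (A *ᵥ v) = v ⬝ᵥ (A *ᵥ x) := by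
  rw [dotProduct_mulVec, ← mulVec_transpose, hA, dotProduct_comm]

private lemma expand_quad {n : ℕ} {A : Matrix (Fin n) (Fin n) ℝ} (hA : Aᵀ = A)
    (x v : Fin n → ℝ) :
    (x - v) ⬝ᵥ (A *ᵥ (x - v))
      = x ⬝ᵥ (A *ᵥ x) - 2 * (v ⬝ᵥ (A *ᵥ x)) + v ⬝ᵥ (A *ᵥ v) := by
  rw [mulVec_sub, dotProduct_sub, sub_dotProduct, sub_dotProduct,
    symm_dot hA x v]
  ring

/-- Completing the square for two quadratic forms. -/
private lemma complete_square {n : ℕ} {B A : Matrix (Fin n) (Fin n) ℝ}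
    (hA : Aᵀ = A) (hB : Bᵀ = B) (hdet : IsUnit (B + A).det)
    (μ y θ : Fin n → ℝ) :
    (θ - y) ⬝ᵥ (A *ᵥ (θ - y)) + (θ - μ) ⬝ᵥ (B *ᵥ (θ - μ))
      = (θ - (B + A)⁻¹ *ᵥ (B *ᵥ μ + A *ᵥ y)) ⬝ᵥ
          ((B + A) *ᵥ (θ - (B + A)⁻¹ *ᵥ (B *ᵥ μ + A *ᵥ y)))
        + (y ⬝ᵥ (A *ᵥ y) + μ ⬝ᵥ (B *ᵥ μ)
            - ((B + A)⁻¹ *ᵥ (B *ᵥ μ + A *ᵥ y)) ⬝ᵥ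
                ((B + A) *ᵥ ((B + A)⁻¹ *ᵥ (B *ᵥ μ + A *ᵥ y)))) := by
  set m := (B + A)⁻¹ *ᵥ (B *ᵥ μ + A *ᵥ y) with hm
  have hQ : (B + A)ᵀ = B + A := by rw [transpose_add, hA, hB]
  have hQm : (B + A) *ᵥ m = B *ᵥ μ + A *ᵥ y := by
    rw [hm, mulVec_mulVec, Matrix.mul_nonsing_inv _ hdet, one_mulVec]
  rw [expand_quad hA, expand_quad hB, expand_quad hQ]
  have h1 : m ⬝ᵥ ((B + A) *ᵥ θ) = y ⬝ᵥ (A *ᵥ θ) + μ ⬝ᵥ (B *ᵥ θ) := by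
    rw [symm_dot hQ, hQm, dotProduct_add, symm_dot hA, symm_dot hB]
    ring
  have h2 : θ ⬝ᵥ ((B + A) *ᵥ θ) = θ ⬝ᵥ (A *ᵥ θ) + θ ⬝ᵥ (B *ᵥ θ) := by
    rw [add_mulVec, dotProduct_add]; ring
  rw [h1, h2]; ring

/-- Gaussian possibility functions are conjugate priors for Gaussian
likelihoods, with posterior parameters P̂ = (P⁻¹ + Σ⁻¹)⁻¹ and μ̂ = P̂(P⁻¹μ + Σ⁻¹y). -/
theorem gaussPoss_conjugate {n : ℕ} (μ y : Fin n → ℝ)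
    (P S : Matrix (Fin n) (Fin n) ℝ) (hP : P.PosDef) (hS : S.PosDef) :
    ∀ θ : Fin n → ℝ,
      gaussPdf θ S y * gaussPoss μ P θ
          / (⨆ θ' : Fin n → ℝ, gaussPdf θ' S y * gaussPoss μ P θ')
        = gaussPoss ((P⁻¹ + S⁻¹)⁻¹ *ᵥ (P⁻¹ *ᵥ μ + S⁻¹ *ᵥ y)) ((P⁻¹ + S⁻¹)⁻¹) θ := by
  have hA : (S⁻¹)ᵀ = S⁻¹ := by simpa using hS.inv.isHermitian.eq
  have hB : (P⁻¹)ᵀ = P⁻¹ := by simpa using hP.inv.isHermitian.eq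
  have hQpd : (P⁻¹ + S⁻¹).PosDef := hP.inv.add hS.inv
  have hdet : IsUnit (P⁻¹ + S⁻¹).det := hQpd.det_pos.ne'.isUnit
  set Q : Matrix (Fin n) (Fin n) ℝ := P⁻¹ + S⁻¹ with hQdef
  set m : Fin n → ℝ := Q⁻¹ *ᵥ (P⁻¹ *ᵥ μ + S⁻¹ *ᵥ y) with hmdef
  set c : ℝ := y ⬝ᵥ (S⁻¹ *ᵥ y) + μ ⬝ᵥ (P⁻¹ *ᵥ μ) - m ⬝ᵥ (Q *ᵥ m) with hcdef
  set C : ℝ := (2 * Real.pi) ^ (-(n : ℝ) / 2) * (S.det) ^ (-(1 : ℝ) / 2) with hCdef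
  have hCpos : 0 < C := by
    apply mul_pos
    · exact Real.rpow_pos_of_pos (by positivity) _
    · exact Real.rpow_pos_of_pos hS.det_pos _
  set K : ℝ := C * Real.exp (-(1/2) * c) with hKdef
  have hKpos : 0 < K := mul_pos hCpos (Real.exp_pos _)
  -- the product rewrites as K times a Gaussian bump centered at m
  have hprod : ∀ θ : Fin n → ℝ,
      gaussPdf θ S y * gaussPoss μ P θ
        = K * Real.exp (-(1/2) * ((θ - m) ⬝ᵥ (Q *ᵥ (θ - m)))) := by
    intro θ
    have hyθ : (y - θ) ⬝ᵥ (S⁻¹ *ᵥ (y - θ)) = (θ - y) ⬝ᵥ (S⁻¹ *ᵥ (θ - y)) := by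
      rw [show y - θ = -(θ - y) by ring, mulVec_neg, dotProduct_neg, neg_dotProduct,
        neg_neg]
    have key := complete_square hA hB hdet μ y θ
    rw [← hQdef, ← hmdef] at key
    rw [gaussPdf, gaussPoss, hyθ, ← hCdef, mul_assoc C, ← Real.exp_add, hKdef,
      mul_assoc C, ← Real.exp_add]
    congr 2
    rw [hcdef]
    linear_combination (-(1/2) : ℝ) * key
  have hub : ∀ θ : Fin n → ℝ, gaussPdf θ S y * gaussPoss μ P θ ≤ K := by
    intro θ
    rw [hprod θ]
    have hq : 0 ≤ (θ - m) ⬝ᵥ (Q *ᵥ (θ - m)) := by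
      simpa using hQpd.posSemidef.dotProduct_mulVec_nonneg (θ - m)
    calc K * Real.exp (-(1/2) * ((θ - m) ⬝ᵥ (Q *ᵥ (θ - m))))
        ≤ K * 1 := by
          apply mul_le_mul_of_nonneg_left _ hKpos.le
          exact Real.exp_le_one_iff.2 (by nlinarith)
      _ = K := mul_one K
  have hsup : (⨆ θ' : Fin n → ℝ, gaussPdf θ' S y * gaussPoss μ P θ') = K := by
    apply le_antisymm (ciSup_le hub)
    have hatm : gaussPdf m S y * gaussPoss μ P m = K := by
      rw [hprod m]
      simp
    calc K = gaussPdf m S y * gaussPoss μ P m := hatm.symm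
      _ ≤ _ := le_ciSup ⟨K, Set.forall_mem_range.2 hub⟩ m
  intro θ
  rw [hsup, hprod θ, mul_div_cancel_left₀ _ hKpos.ne', gaussPoss,
    Matrix.nonsing_inv_nonsing_inv _ hdet]
end

section
/- (Kalman/SqrtEnKF update consistency) Let Σ be positive definite n×n, H an m×n matrix, V positive definite m×m. Define S = HΣHᵀ + V, the Kalman gain K = ΣHᵀS⁻¹, and the adjusted gain K̃ = ΣHᵀ(S^{1/2})⁻ᵀ(S^{1/2} + V^{1/2})⁻¹, where A^{1/2} denotes the Cholesky factor. Then (I - K̃H)Σ(I - K̃H)ᵀ = (I - KH)Σ. -/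
open Matrix

lemma lowtri_det_isUnit {m : ℕ} (T : Matrix (Fin m) (Fin m) ℝ)
    (hlow : ∀ i j : Fin m, i < j → T i j = 0) (hdiag : ∀ i : Fin m, 0 < T i i) :
    IsUnit T.det := by
  have hbt : T.BlockTriangular OrderDual.toDual := by
    intro i j h
    exact hlow i j (by simpa using h)
  rw [Matrix.det_of_lowerTriangular T hbt]
  exact (Finset.prod_pos (fun i _ => hdiag i)).ne'.isUnit

lemma sqrt_key {m : ℕ} (T W : Matrix (Fin m) (Fin m) ℝ)
    (hT : IsUnit T.det) (hU : IsUnit (T + W).det) :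
    (Tᵀ)⁻¹ * (T + W)⁻¹ + ((Tᵀ)⁻¹ * (T + W)⁻¹)ᵀ
      - ((Tᵀ)⁻¹ * (T + W)⁻¹) * (T * Tᵀ - W * Wᵀ) * ((Tᵀ)⁻¹ * (T + W)⁻¹)ᵀ
      = (T * Tᵀ)⁻¹ := by
  set U := T + W with hUdef
  have hTt : IsUnit Tᵀ.det := by rwa [Matrix.det_transpose]
  have hUt : IsUnit Uᵀ.det := by rwa [Matrix.det_transpose]
  have hNt : ((Tᵀ)⁻¹ * U⁻¹)ᵀ = (Uᵀ)⁻¹ * T⁻¹ := by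
    rw [Matrix.transpose_mul, Matrix.transpose_nonsing_inv, Matrix.transpose_nonsing_inv,
      Matrix.transpose_transpose]
  have hfac : T * Tᵀ - W * Wᵀ = U * Tᵀ + T * Uᵀ - U * Uᵀ := by
    rw [hUdef, Matrix.transpose_add]
    noncomm_ring
  have hsand : U⁻¹ * (T * Tᵀ - W * Wᵀ) * (Uᵀ)⁻¹ = Tᵀ * (Uᵀ)⁻¹ + U⁻¹ * T - 1 := by
    rw [hfac]
    simp only [Matrix.add_mul, Matrix.sub_mul, Matrix.mul_add, Matrix.mul_sub, Matrix.mul_assoc,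
      Matrix.nonsing_inv_mul_cancel_left _ _ hU, Matrix.mul_nonsing_inv _ hUt, Matrix.mul_one,
      Matrix.nonsing_inv_mul _ hU]
  have hmid : ((Tᵀ)⁻¹ * U⁻¹) * (T * Tᵀ - W * Wᵀ) * ((Tᵀ)⁻¹ * U⁻¹)ᵀ
      = (Uᵀ)⁻¹ * T⁻¹ + (Tᵀ)⁻¹ * U⁻¹ - (Tᵀ)⁻¹ * T⁻¹ := by
    rw [hNt]
    have h2 : (Tᵀ)⁻¹ * U⁻¹ * (T * Tᵀ - W * Wᵀ) * ((Uᵀ)⁻¹ * T⁻¹)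
        = (Tᵀ)⁻¹ * (U⁻¹ * (T * Tᵀ - W * Wᵀ) * (Uᵀ)⁻¹) * T⁻¹ := by
      simp only [Matrix.mul_assoc]
    rw [h2, hsand]
    simp only [Matrix.mul_add, Matrix.mul_sub, Matrix.add_mul, Matrix.sub_mul, Matrix.mul_one,
      Matrix.mul_assoc, Matrix.nonsing_inv_mul_cancel_left _ _ hTt,
      Matrix.mul_nonsing_inv _ hT, Matrix.mul_one]
  rw [hmid, hNt, Matrix.mul_inv_rev]
  abel

/-- consistency of the square-root EnKF update. With S = HΣHᵀ + V,
K = ΣHᵀS⁻¹ and K̃ = ΣHᵀ(S^{1/2})⁻ᵀ(S^{1/2} + V^{1/2})⁻¹ (Cholesky factors), one has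
(I - K̃H) Σ (I - K̃H)ᵀ = (I - KH) Σ. -/
theorem sqrtEnKF_update_consistency {n m : ℕ}
    (Sg : Matrix (Fin n) (Fin n) ℝ) (H : Matrix (Fin m) (Fin n) ℝ)
    (V S12 V12 : Matrix (Fin m) (Fin m) ℝ)
    (hSg : Sg.PosDef) (hV : V.PosDef)
    -- S12 is the Cholesky factor of S = HΣHᵀ + V
    (hS12low : ∀ i j : Fin m, i < j → S12 i j = 0) (hS12diag : ∀ i : Fin m, 0 < S12 i i)
    (hS12 : S12 * S12ᵀ = H * Sg * Hᵀ + V)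
    -- V12 is the Cholesky factor of V
    (hV12low : ∀ i j : Fin m, i < j → V12 i j = 0) (hV12diag : ∀ i : Fin m, 0 < V12 i i)
    (hV12 : V12 * V12ᵀ = V) :
    (1 - (Sg * Hᵀ * (S12ᵀ)⁻¹ * (S12 + V12)⁻¹) * H) * Sg
        * (1 - (Sg * Hᵀ * (S12ᵀ)⁻¹ * (S12 + V12)⁻¹) * H)ᵀ
      = (1 - (Sg * Hᵀ * (H * Sg * Hᵀ + V)⁻¹) * H) * Sg := by
  have hT : IsUnit S12.det := lowtri_det_isUnit S12 hS12low hS12diag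
  have hU : IsUnit (S12 + V12).det := by
    refine lowtri_det_isUnit _ (fun i j hij => ?_) (fun i => ?_)
    · simp [Matrix.add_apply, hS12low i j hij, hV12low i j hij]
    · simpa [Matrix.add_apply] using add_pos (hS12diag i) (hV12diag i)
  have hSymm : Sgᵀ = Sg := by
    have h := hSg.1.eq
    simpa [Matrix.conjTranspose_eq_transpose_of_trivial] using h
  have key := sqrt_key S12 V12 hT hU
  rw [hS12, hV12, add_sub_cancel_right] at key
  rw [← key]
  simp only [Matrix.transpose_sub, Matrix.transpose_one, Matrix.transpose_mul,
    Matrix.transpose_transpose, hSymm]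
  simp only [Matrix.sub_mul, Matrix.mul_sub, Matrix.add_mul, Matrix.mul_add, Matrix.one_mul,
    Matrix.mul_one, Matrix.mul_assoc]
  abel
end

section
/- (Gaussianity of the affinely transported ensemble posterior) Let x be an uncertain variable on ℝⁿ described by N̄(μ, Σ) with Σ positive definite, let K, K̃ be the Kalman and adjusted gains as in the SqrtEnKF, and define the affine map M̂(x) = (I - K̃H)x + (K̃Hμ + Ky - KHμ). Then M̂(x) is described by the Gaussian possibility function N̄(μ + K(y - Hμ), (I - KH)Σ), i.e., the pushforward of N̄(μ, Σ) under M̂ equals N̄(μ + K(y - Hμ), (I - KH)Σ) — which is the Kalman filter posterior. -/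
/-!
The update map is affine and invertible, so the sup defining the pushforward is attained at
the single preimage of `z`, and an invertible affine image of `N̄(μ, Σ)` is `N̄(Aμ + b, AΣAᵀ)`.
The mean `Aμ + b` is `μ + K(y - Hμ)` by linearity. For the covariance, with
`S = PPᵀ = HΣHᵀ + QQᵀ` (`P`, `Q` the square roots of `S` and `V`) and `L = (P + Q)Pᵀ`, we have
`K̃ = ΣHᵀL⁻¹` and
`(I - K̃H)Σ(I - K̃H)ᵀ = Σ - ΣHᵀ(L⁻¹ + L⁻ᵀ - L⁻¹HΣHᵀL⁻ᵀ)HΣ`;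
since `L + Lᵀ - HΣHᵀ = (P + Q)(P + Q)ᵀ`, the middle factor is `S⁻¹`, leaving `(I - KH)Σ`.
-/

open Matrix

theorem Real.iSup_mem_singleton {α : Type*} {f : α → ℝ} {a : α} (hf : 0 ≤ f a) :
    ⨆ x ∈ ({a} : Set α), f x = f a := by
  have : Nonempty α := ⟨a⟩
  have hle : ∀ x, ⨆ _ : x ∈ ({a} : Set α), f x ≤ f a := fun x =>
    Real.iSup_le (fun hx => by rw [Set.mem_singleton_iff.mp hx]) hf
  refine ciSup_eq_of_forall_le_of_forall_lt_exists_gt hle fun w hw => ⟨a, ?_⟩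
  rwa [ciSup_pos (Set.mem_singleton a)]

theorem Matrix.IsLowerTriangular.isUnit_det_of_diag_pos {ι R : Type*} [Fintype ι]
    [LinearOrder ι] [Field R] [LinearOrder R] [IsStrictOrderedRing R]
    {M : Matrix ι ι R} (hM : M.IsLowerTriangular) (hdiag : ∀ i, 0 < M i i) :
    IsUnit M.det := by
  rw [det_of_isLowerTriangular M hM]
  exact (Finset.prod_pos fun i _ => hdiag i).ne'.isUnit

section Gaussian

variable {n : ℕ}

theorem gaussPoss_inv_affine (μ : Fin n → ℝ) (Sg A : Matrix (Fin n) (Fin n) ℝ)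
    (hA : IsUnit A.det) (b z : Fin n → ℝ) :
    gaussPoss μ Sg (A⁻¹ *ᵥ (z - b)) = gaussPoss (A *ᵥ μ + b) (A * Sg * Aᵀ) z := by
  have hdiff : A⁻¹ *ᵥ (z - b) - μ = A⁻¹ *ᵥ (z - (A *ᵥ μ + b)) := by
    rw [sub_add_eq_sub_sub_swap, mulVec_sub A⁻¹ (z - b), mulVec_mulVec, nonsing_inv_mul _ hA,
      one_mulVec]
  rw [gaussPoss, gaussPoss, hdiff, Matrix.mul_inv_rev, Matrix.mul_inv_rev,
    ← transpose_nonsing_inv, ← mulVec_mulVec, ← mulVec_mulVec, dotProduct_mulVec _ A⁻¹ᵀ,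
    vecMul_transpose]

theorem iSup_gaussPoss_affine_preimage (μ : Fin n → ℝ) (Sg A : Matrix (Fin n) (Fin n) ℝ)
    (hA : IsUnit A.det) (b z : Fin n → ℝ) :
    ⨆ x ∈ {x | A *ᵥ x + b = z}, gaussPoss μ Sg x = gaussPoss (A *ᵥ μ + b) (A * Sg * Aᵀ) z := by
  have hpre : {x | A *ᵥ x + b = z} = {A⁻¹ *ᵥ (z - b)} := by
    ext x
    rw [Set.mem_ofPred_eq, Set.mem_singleton_iff, ← eq_sub_iff_add_eq]
    constructor
    · intro hx
      rw [← hx, mulVec_mulVec, nonsing_inv_mul _ hA, one_mulVec]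
    · rintro rfl
      rw [mulVec_mulVec, mul_nonsing_inv _ hA, one_mulVec]
  rw [hpre, Real.iSup_mem_singleton (f := gaussPoss μ Sg) (Real.exp_pos _).le,
    gaussPoss_inv_affine μ Sg A hA]

end Gaussian

section SquareRootGain

variable {ι κ R : Type*} [Fintype ι] [Fintype κ] [DecidableEq κ] [CommRing R]

theorem one_sub_gain_mul_mul_transpose {Sg : Matrix κ κ R} (hSg : Sg.IsSymm)
    (H : Matrix ι κ R) (G : Matrix ι ι R) :
    (1 - Sg * Hᵀ * G * H) * Sg * (1 - Sg * Hᵀ * G * H)ᵀ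
      = Sg - Sg * Hᵀ * (G + Gᵀ - G * (H * Sg * Hᵀ) * Gᵀ) * (H * Sg) := by
  simp only [transpose_sub, transpose_one, transpose_mul, transpose_transpose, hSg.eq,
    Matrix.mul_sub, Matrix.sub_mul, Matrix.mul_add, Matrix.add_mul, Matrix.one_mul,
    Matrix.mul_one, Matrix.mul_assoc]
  abel

theorem inv_add_transpose_sub_eq_inv_mul_transpose [DecidableEq ι] {P Q : Matrix ι ι R}
    (hP : IsUnit P.det) (hPQ : IsUnit (P + Q).det) :
    Pᵀ⁻¹ * (P + Q)⁻¹ + (Pᵀ⁻¹ * (P + Q)⁻¹)ᵀ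
        - Pᵀ⁻¹ * (P + Q)⁻¹ * (P * Pᵀ - Q * Qᵀ) * (Pᵀ⁻¹ * (P + Q)⁻¹)ᵀ
      = (P * Pᵀ)⁻¹ := by
  set G := Pᵀ⁻¹ * (P + Q)⁻¹
  have hPT : IsUnit Pᵀ.det := by rwa [det_transpose]
  have hGPQ : G * (P + Q) = Pᵀ⁻¹ := by
    rw [Matrix.mul_assoc, nonsing_inv_mul _ hPQ, Matrix.mul_one]
  have hGL : G * ((P + Q) * Pᵀ) = 1 := by
    rw [← Matrix.mul_assoc, hGPQ, nonsing_inv_mul _ hPT]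
  calc G + Gᵀ - G * (P * Pᵀ - Q * Qᵀ) * Gᵀ
      = G * (G * ((P + Q) * Pᵀ))ᵀ + G * ((P + Q) * Pᵀ) * Gᵀ - G * (P * Pᵀ - Q * Qᵀ) * Gᵀ := by
        rw [hGL, transpose_one, Matrix.mul_one, Matrix.one_mul]
    _ = G * (P + Q) * (G * (P + Q))ᵀ := by
        simp only [transpose_mul, transpose_add, transpose_transpose]
        noncomm_ring
    _ = (P * Pᵀ)⁻¹ := by
        rw [hGPQ, transpose_nonsing_inv, transpose_transpose, Matrix.mul_inv_rev]

theorem one_sub_sqrt_gain_mul_mul_transpose [DecidableEq ι] {Sg : Matrix κ κ R}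
    (hSg : Sg.IsSymm) (H : Matrix ι κ R) {P Q : Matrix ι ι R}
    (hP : IsUnit P.det) (hPQ : IsUnit (P + Q).det)
    (hPP : P * Pᵀ = H * Sg * Hᵀ + Q * Qᵀ) :
    (1 - Sg * Hᵀ * Pᵀ⁻¹ * (P + Q)⁻¹ * H) * Sg * (1 - Sg * Hᵀ * Pᵀ⁻¹ * (P + Q)⁻¹ * H)ᵀ
      = (1 - Sg * Hᵀ * (P * Pᵀ)⁻¹ * H) * Sg := by
  have hHSH : H * Sg * Hᵀ = P * Pᵀ - Q * Qᵀ := by rw [hPP, add_sub_cancel_right]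
  have hgain : Sg * Hᵀ * Pᵀ⁻¹ * (P + Q)⁻¹ = Sg * Hᵀ * (Pᵀ⁻¹ * (P + Q)⁻¹) := Matrix.mul_assoc ..
  rw [hgain, one_sub_gain_mul_mul_transpose hSg, hHSH,
    inv_add_transpose_sub_eq_inv_mul_transpose hP hPQ]
  simp only [Matrix.sub_mul, Matrix.one_mul, Matrix.mul_assoc]

end SquareRootGain

theorem pEnKF_update_gaussian_general {n m : ℕ}
    (Sg : Matrix (Fin n) (Fin n) ℝ) (H : Matrix (Fin m) (Fin n) ℝ)
    (V S12 V12 : Matrix (Fin m) (Fin m) ℝ) (μ : Fin n → ℝ) (y : Fin m → ℝ)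
    (hSg : Sg.PosDef)
    (hS12low : ∀ i j : Fin m, i < j → S12 i j = 0) (hS12diag : ∀ i : Fin m, 0 < S12 i i)
    (hS12 : S12 * S12ᵀ = H * Sg * Hᵀ + V)
    (hV12low : ∀ i j : Fin m, i < j → V12 i j = 0) (hV12diag : ∀ i : Fin m, 0 < V12 i i)
    (hV12 : V12 * V12ᵀ = V)
    -- the Kalman gain and the adjusted gain
    (K Kt : Matrix (Fin n) (Fin m) ℝ)
    (hK : K = Sg * Hᵀ * (H * Sg * Hᵀ + V)⁻¹)
    (hKt : Kt = Sg * Hᵀ * (S12ᵀ)⁻¹ * (S12 + V12)⁻¹)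
    (hinv : IsUnit (1 - Kt * H)) :
    ∀ z : Fin n → ℝ,
      (⨆ x ∈ {x : Fin n → ℝ |
          (1 - Kt * H) *ᵥ x + (Kt *ᵥ (H *ᵥ μ) + K *ᵥ y - K *ᵥ (H *ᵥ μ)) = z},
        gaussPoss μ Sg x)
        = gaussPoss (μ + K *ᵥ (y - H *ᵥ μ)) ((1 - K * H) * Sg) z := by
  intro z
  have hS12tri : S12.IsLowerTriangular := fun i j h => hS12low i j h
  have hV12tri : V12.IsLowerTriangular := fun i j h => hV12low i j h
  have hmean : (1 - Kt * H) *ᵥ μ + (Kt *ᵥ (H *ᵥ μ) + K *ᵥ y - K *ᵥ (H *ᵥ μ))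
      = μ + K *ᵥ (y - H *ᵥ μ) := by
    rw [sub_mulVec, one_mulVec, ← mulVec_mulVec, mulVec_sub]
    abel
  have hcov : (1 - Kt * H) * Sg * (1 - Kt * H)ᵀ = (1 - K * H) * Sg := by
    rw [hK, hKt, ← hS12]
    exact one_sub_sqrt_gain_mul_mul_transpose (isHermitian_iff_isSymm.mp hSg.isHermitian) H
      (hS12tri.isUnit_det_of_diag_pos hS12diag)
      (IsLowerTriangular.isUnit_det_of_diag_pos (hS12tri.add hV12tri)
        fun i => add_pos (hS12diag i) (hV12diag i))
      (by rw [hS12, hV12])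
  rw [iSup_gaussPoss_affine_preimage μ Sg _ ((isUnit_iff_isUnit_det _).mp hinv), hmean, hcov]

/-- the pushforward of N̄(μ, Σ) under the SqrtEnKF affine update map
M̂(x) = (I - K̃H)x + (K̃Hμ + Ky - KHμ) is the Kalman filter posterior
N̄(μ + K(y - Hμ), (I - KH)Σ). -/
theorem pEnKF_update_gaussian {n m : ℕ}
    (Sg : Matrix (Fin n) (Fin n) ℝ) (H : Matrix (Fin m) (Fin n) ℝ)
    (V S12 V12 : Matrix (Fin m) (Fin m) ℝ) (μ : Fin n → ℝ) (y : Fin m → ℝ)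
    (hSg : Sg.PosDef) (hV : V.PosDef)
    (hS12low : ∀ i j : Fin m, i < j → S12 i j = 0) (hS12diag : ∀ i : Fin m, 0 < S12 i i)
    (hS12 : S12 * S12ᵀ = H * Sg * Hᵀ + V)
    (hV12low : ∀ i j : Fin m, i < j → V12 i j = 0) (hV12diag : ∀ i : Fin m, 0 < V12 i i)
    (hV12 : V12 * V12ᵀ = V)
    -- the Kalman gain and the adjusted gain
    (K Kt : Matrix (Fin n) (Fin m) ℝ)
    (hK : K = Sg * Hᵀ * (H * Sg * Hᵀ + V)⁻¹)
    (hKt : Kt = Sg * Hᵀ * (S12ᵀ)⁻¹ * (S12 + V12)⁻¹)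
    (hinv : IsUnit (1 - Kt * H)) :
    ∀ z : Fin n → ℝ,
      (⨆ x ∈ {x : Fin n → ℝ |
          (1 - Kt * H) *ᵥ x + (Kt *ᵥ (H *ᵥ μ) + K *ᵥ y - K *ᵥ (H *ᵥ μ)) = z},
        gaussPoss μ Sg x)
        = gaussPoss (μ + K *ᵥ (y - H *ᵥ μ)) ((1 - K * H) * Sg) z :=
  pEnKF_update_gaussian_general Sg H V S12 V12 μ y hSg hS12low hS12diag hS12 hV12low hV12diag hV12 K
    Kt hK hKt hinv
end

section
/- (Max-plus Chapman–Kolmogorov for Gaussian possibility functions) If f_k = N̄(μ, Σ) on ℝⁿ with Σ positive definite and the conditional possibility function is f_{k+1|k}(x'|x) = N̄(x'; Fx, U) with F an invertible n×n matrix and U positive definite, then the predicted possibility function f_{k+1}(x') = sup_x f_{k+1|k}(x'|x) f_k(x) equals N̄(x'; Fμ, FΣFᵀ + U). -/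
open Matrix

lemma dot_flip {n : ℕ} (X : Matrix (Fin n) (Fin n) ℝ) (v w : Fin n → ℝ) :
    (X *ᵥ v) ⬝ᵥ w = v ⬝ᵥ Xᵀ *ᵥ w := by
  rw [dotProduct_mulVec, vecMul_transpose]

lemma dot_swap {n : ℕ} (X : Matrix (Fin n) (Fin n) ℝ) (v w : Fin n → ℝ) :
    v ⬝ᵥ X *ᵥ w = w ⬝ᵥ Xᵀ *ᵥ v := by
  rw [dotProduct_comm, dot_flip]

lemma psd_add_pd {n : ℕ} {A B : Matrix (Fin n) (Fin n) ℝ}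
    (hA : A.PosSemidef) (hB : B.PosDef) : (A + B).PosDef := by
  refine PosDef.of_dotProduct_mulVec_pos (hA.isHermitian.add hB.isHermitian) (fun x hx => ?_)
  simp only [add_mulVec, dotProduct_add]
  exact add_pos_of_nonneg_of_pos (hA.dotProduct_mulVec_nonneg x) (hB.dotProduct_mulVec_pos hx)

lemma gauss_key {n : ℕ} (S F U : Matrix (Fin n) (Fin n) ℝ)
    (hS : S.PosDef) (hU : U.PosDef) (y z : Fin n → ℝ) :
    (z - F *ᵥ y) ⬝ᵥ U⁻¹ *ᵥ (z - F *ᵥ y) + y ⬝ᵥ S⁻¹ *ᵥ y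
      = z ⬝ᵥ (F * S * Fᵀ + U)⁻¹ *ᵥ z
        + (y - (S * Fᵀ * (F * S * Fᵀ + U)⁻¹) *ᵥ z) ⬝ᵥ
            ((Fᵀ * U⁻¹ * F + S⁻¹) *ᵥ (y - (S * Fᵀ * (F * S * Fᵀ + U)⁻¹) *ᵥ z)) := by
  have hFS : (F * S * Fᵀ).PosSemidef := by
    have := hS.posSemidef.mul_mul_conjTranspose_same F
    rwa [conjTranspose_eq_transpose_of_trivial] at this
  have hP : (F * S * Fᵀ + U).PosDef := psd_add_pd hFS hU
  set P := F * S * Fᵀ + U with hPdef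
  have hSdet : IsUnit S.det := isUnit_iff_ne_zero.mpr hS.det_pos.ne'
  have hUdet : IsUnit U.det := isUnit_iff_ne_zero.mpr hU.det_pos.ne'
  have hPdet : IsUnit P.det := isUnit_iff_ne_zero.mpr hP.det_pos.ne'
  have hSsym : Sᵀ = S := by
    rw [← conjTranspose_eq_transpose_of_trivial]; exact hS.isHermitian
  have hPsym : Pᵀ = P := by
    rw [← conjTranspose_eq_transpose_of_trivial]; exact hP.isHermitian
  have hUisym : (U⁻¹)ᵀ = U⁻¹ := by
    rw [← conjTranspose_eq_transpose_of_trivial]; exact hU.inv.isHermitian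
  have hSisym : (S⁻¹)ᵀ = S⁻¹ := by
    rw [← conjTranspose_eq_transpose_of_trivial]; exact hS.inv.isHermitian
  have hPisym : (P⁻¹)ᵀ = P⁻¹ := by
    rw [← conjTranspose_eq_transpose_of_trivial]; exact hP.inv.isHermitian
  set A := Fᵀ * U⁻¹ * F + S⁻¹ with hAdef
  set M := S * Fᵀ * P⁻¹ with hMdef
  have hAsym : Aᵀ = A := by
    rw [hAdef, transpose_add, transpose_mul, transpose_mul, transpose_transpose,
      hUisym, hSisym, Matrix.mul_assoc]
  have h1 : A * (S * Fᵀ) = Fᵀ * U⁻¹ * P := by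
    rw [hAdef, hPdef, Matrix.add_mul, Matrix.mul_add]
    rw [Matrix.nonsing_inv_mul_cancel_left S Fᵀ hSdet,
      Matrix.mul_assoc Fᵀ U⁻¹ U, Matrix.nonsing_inv_mul U hUdet, Matrix.mul_one]
    simp [Matrix.mul_assoc]
  have hI1 : A * M = Fᵀ * U⁻¹ := by
    rw [hMdef, ← Matrix.mul_assoc, h1, Matrix.mul_assoc,
      Matrix.mul_nonsing_inv P hPdet, Matrix.mul_one]
  have hMt : Mᵀ = P⁻¹ * (F * S) := by
    rw [hMdef, transpose_mul, transpose_mul, transpose_transpose, hSsym, hPisym]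
  have hI3 : Mᵀ * (A * M) = U⁻¹ - P⁻¹ := by
    rw [hI1, hMt, Matrix.mul_assoc, Matrix.mul_assoc, ← Matrix.mul_assoc S Fᵀ U⁻¹,
      ← Matrix.mul_assoc F (S * Fᵀ) U⁻¹, ← Matrix.mul_assoc F S Fᵀ]
    have hFS' : F * S * Fᵀ = P - U := by rw [hPdef]; abel
    rw [hFS', Matrix.sub_mul, Matrix.mul_sub, Matrix.mul_nonsing_inv U hUdet,
      ← Matrix.mul_assoc, Matrix.nonsing_inv_mul P hPdet, Matrix.one_mul, Matrix.mul_one]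
  simp only [mulVec_sub, dotProduct_sub, sub_dotProduct, mulVec_mulVec]
  rw [dot_flip F y, dot_flip F y, dot_flip M z, dot_flip M z]
  simp only [mulVec_mulVec]
  rw [dot_swap (U⁻¹ * F) z y, dot_swap (Mᵀ * A) z y]
  rw [show (U⁻¹ * F)ᵀ = Fᵀ * U⁻¹ by rw [transpose_mul, hUisym]]
  rw [show (Mᵀ * A)ᵀ = A * M by rw [transpose_mul, hAsym, transpose_transpose]]
  rw [hI1]
  rw [show Mᵀ * (Fᵀ * U⁻¹) = U⁻¹ - P⁻¹ from by rw [← hI1]; exact hI3]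
  rw [hAdef]
  simp only [sub_mulVec, add_mulVec, dotProduct_sub, dotProduct_add, Matrix.mul_assoc]
  ring

/-- max-plus Chapman–Kolmogorov for Gaussian possibility functions:
sup_x N̄(x'; Fx, U) N̄(x; μ, Σ) = N̄(x'; Fμ, FΣFᵀ + U). -/
theorem gaussPoss_prediction {n : ℕ} (μ : Fin n → ℝ)
    (S F U : Matrix (Fin n) (Fin n) ℝ)
    (hS : S.PosDef) (hU : U.PosDef) (hF : IsUnit F) :
    ∀ x' : Fin n → ℝ,
      (⨆ x : Fin n → ℝ, gaussPoss (F *ᵥ x) U x' * gaussPoss μ S x)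
        = gaussPoss (F *ᵥ μ) (F * S * Fᵀ + U) x' := by
  intro x'
  simp only [gaussPoss]
  set P := F * S * Fᵀ + U with hPdef
  set z := x' - F *ᵥ μ with hz
  set A := Fᵀ * U⁻¹ * F + S⁻¹ with hAdef
  set M := S * Fᵀ * P⁻¹ with hMdef
  have hA : A.PosDef := by
    refine psd_add_pd ?_ hS.inv
    have := hU.inv.posSemidef.conjTranspose_mul_mul_same F
    rwa [conjTranspose_eq_transpose_of_trivial] at this
  have hkey := gauss_key S F U hS hU
  have hprod : ∀ x : Fin n → ℝ,
      Real.exp (-(1/2) * ((x' - F *ᵥ x) ⬝ᵥ (U⁻¹ *ᵥ (x' - F *ᵥ x)))) *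
        Real.exp (-(1/2) * ((x - μ) ⬝ᵥ (S⁻¹ *ᵥ (x - μ))))
      = Real.exp (-(1/2) * ((z - F *ᵥ (x - μ)) ⬝ᵥ U⁻¹ *ᵥ (z - F *ᵥ (x - μ))
          + (x - μ) ⬝ᵥ S⁻¹ *ᵥ (x - μ))) := by
    intro x
    rw [← Real.exp_add]
    congr 1
    have hxx : x' - F *ᵥ x = z - F *ᵥ (x - μ) := by
      rw [hz, mulVec_sub]; abel
    rw [hxx]; ring
  have hub : ∀ x : Fin n → ℝ,
      Real.exp (-(1/2) * ((x' - F *ᵥ x) ⬝ᵥ (U⁻¹ *ᵥ (x' - F *ᵥ x)))) *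
        Real.exp (-(1/2) * ((x - μ) ⬝ᵥ (S⁻¹ *ᵥ (x - μ))))
      ≤ Real.exp (-(1/2) * (z ⬝ᵥ P⁻¹ *ᵥ z)) := by
    intro x
    rw [hprod x, Real.exp_le_exp]
    have h := hkey (x - μ) z
    have h0 : 0 ≤ ((x - μ) - M *ᵥ z) ⬝ᵥ (A *ᵥ ((x - μ) - M *ᵥ z)) := by
      simpa using hA.posSemidef.dotProduct_mulVec_nonneg ((x - μ) - M *ᵥ z)
    rw [← hAdef, ← hMdef, ← hPdef] at h
    linarith
  apply le_antisymm
  · exact ciSup_le hub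
  · have hbdd : BddAbove (Set.range fun x : Fin n → ℝ =>
        Real.exp (-(1/2) * ((x' - F *ᵥ x) ⬝ᵥ (U⁻¹ *ᵥ (x' - F *ᵥ x)))) *
          Real.exp (-(1/2) * ((x - μ) ⬝ᵥ (S⁻¹ *ᵥ (x - μ))))) := by
      refine ⟨Real.exp (-(1/2) * (z ⬝ᵥ P⁻¹ *ᵥ z)), ?_⟩
      rintro _ ⟨x, rfl⟩
      exact hub x
    have hle := le_ciSup hbdd (μ + M *ᵥ z)
    refine le_trans (le_of_eq ?_) hle
    rw [hprod (μ + M *ᵥ z)]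
    congr 1
    have h := hkey (μ + M *ᵥ z - μ) z
    rw [← hAdef, ← hMdef, ← hPdef] at h
    have hy : μ + M *ᵥ z - μ = M *ᵥ z := by abel
    rw [h, hy]
    simp
end

section
/- (Monte Carlo max-consistency) Let f be a continuous possibility function on ℝⁿ with 0 < ∫f < ∞, let x₁, x₂, … be i.i.d. samples from the probability density proportional to f, and set wᵢ = f(xᵢ). Then for any bounded continuous function φ : ℝⁿ → [0,∞) whose support has nonempty-interior intersection with {f > 0}, max_{1≤i≤N} wᵢ φ(xᵢ) converges almost surely to sup_{x∈ℝⁿ} φ(x)f(x) as N → ∞. -/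
open MeasureTheory Filter

/-- Monte Carlo max-consistency. If x₁, x₂, … are i.i.d. from the
probability density proportional to a continuous possibility function f, wᵢ = f(xᵢ), and
φ is bounded continuous nonnegative with supp φ ∩ {f > 0} having nonempty interior, then
max_{1≤i≤N} wᵢ φ(xᵢ) → sup_x φ(x) f(x) almost surely. -/
theorem monteCarlo_max_consistency {n : ℕ}
    (f : (Fin n → ℝ) → ℝ) (hfcont : Continuous f)
    (hf01 : ∀ x, 0 ≤ f x ∧ f x ≤ 1) (hfsup : (⨆ x, f x) = 1)
    (hfint : Integrable f) (hfintpos : 0 < ∫ x, f x)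
    (Ω : Type*) [MeasurableSpace Ω] (P : Measure Ω) [IsProbabilityMeasure P]
    (X : ℕ → Ω → (Fin n → ℝ)) (hXmeas : ∀ i, Measurable (X i))
    (hiid : ProbabilityTheory.iIndepFun X P)
    (hlaw : ∀ i, Measure.map (X i) P
      = volume.withDensity (fun x => ENNReal.ofReal (f x / ∫ x', f x')))
    (φ : (Fin n → ℝ) → ℝ) (hφcont : Continuous φ) (hφbdd : ∃ Cφ, ∀ x, φ x ≤ Cφ)
    (hφnonneg : ∀ x, 0 ≤ φ x)
    (hsupp : (interior (Function.support φ ∩ {x | 0 < f x})).Nonempty) :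
    ∀ᵐ ω ∂P,
      Tendsto (fun N : ℕ =>
          (Finset.range (N + 1)).sup' (by simp) (fun i => f (X i ω) * φ (X i ω)))
        atTop (nhds (⨆ x, φ x * f x)) := by
  obtain ⟨Cφ, hCφ⟩ := hφbdd
  set g : (Fin n → ℝ) → ℝ := fun x => φ x * f x with hgdef
  have hgcont : Continuous g := hφcont.mul hfcont
  have hgnonneg : ∀ x, 0 ≤ g x := fun x => mul_nonneg (hφnonneg x) (hf01 x).1
  have hbdd : BddAbove (Set.range g) := by
    refine ⟨max Cφ 0, ?_⟩
    rintro _ ⟨x, rfl⟩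
    have h1 : g x ≤ φ x := by
      have := (hf01 x).2
      have := hφnonneg x
      simpa [hgdef] using mul_le_of_le_one_right (hφnonneg x) (hf01 x).2
    exact h1.trans ((hCφ x).trans (le_max_left _ _))
  set S := ⨆ x, g x with hS
  have hle : ∀ x, g x ≤ S := fun x => le_ciSup hbdd x
  set c := ∫ x', f x' with hc
  have hcpos : 0 < c := hfintpos
  set μ := volume.withDensity (fun x => ENNReal.ofReal (f x / c)) with hμ
  have key : ∀ t, t < S → ∀ᵐ ω ∂P, ∀ᶠ N in atTop,
      t < (Finset.range (N + 1)).sup' (by simp) (fun i => f (X i ω) * φ (X i ω)) := by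
    intro t ht
    obtain ⟨y, hfy, hgy⟩ : ∃ y, 0 < f y ∧ t < g y := by
      rcases lt_or_ge t 0 with h | h
      · obtain ⟨y, hy⟩ := hsupp
        have hy' := interior_subset hy
        have hφy : 0 < φ y := lt_of_le_of_ne (hφnonneg y) (Ne.symm hy'.1)
        exact ⟨y, hy'.2, lt_of_lt_of_le h (le_of_lt (mul_pos hφy hy'.2))⟩
      · obtain ⟨y, hy⟩ := exists_lt_of_lt_ciSup ht
        have hfy : 0 < f y := by
          by_contra hne
          have : f y = 0 := le_antisymm (le_of_not_gt hne) (hf01 y).1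
          simp [hgdef, this] at hy
          linarith
        exact ⟨y, hfy, hy⟩
    set A : Set (Fin n → ℝ) := {x | t < g x} with hA
    have hAopen : IsOpen A := isOpen_lt continuous_const hgcont
    have hAmeas : MeasurableSet A := hAopen.measurableSet
    set U : Set (Fin n → ℝ) := A ∩ {x | f y / 2 < f x} with hU
    have hUopen : IsOpen U := hAopen.inter (isOpen_lt continuous_const hfcont)
    have hyU : y ∈ U := ⟨hgy, by simp; linarith⟩
    have hUvol : 0 < volume U := hUopen.measure_pos _ ⟨y, hyU⟩
    have hμA : 0 < μ A := by
      have h1 : μ U ≤ μ A := measure_mono Set.inter_subset_left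
      have h2 : ENNReal.ofReal (f y / 2 / c) * volume U ≤ μ U := by
        rw [hμ, withDensity_apply _ hUopen.measurableSet, ← setLIntegral_const]
        refine setLIntegral_mono (by fun_prop) ?_
        intro x hx
        refine ENNReal.ofReal_le_ofReal ?_
        exact div_le_div_of_nonneg_right (le_of_lt hx.2) hcpos.le
      have hpos : 0 < ENNReal.ofReal (f y / 2 / c) :=
        ENNReal.ofReal_pos.2 (by positivity)
      calc (0 : ENNReal) < ENNReal.ofReal (f y / 2 / c) * volume U :=
            ENNReal.mul_pos hpos.ne' hUvol.ne'
        _ ≤ μ U := h2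
        _ ≤ μ A := h1
    set E : ℕ → Set Ω := fun i => X i ⁻¹' A with hE
    have hEmeas : ∀ i, MeasurableSet (E i) := fun i => (hXmeas i) hAmeas
    have hPE : ∀ i, P (E i) = μ A := fun i => by
      rw [hE]
      simp only
      rw [← Measure.map_apply (hXmeas i) hAmeas, hlaw i, hμ]
    have hindep : ProbabilityTheory.iIndepSet E P := by
      rw [ProbabilityTheory.iIndepSet_iff_meas_biInter hEmeas]
      intro s
      exact (ProbabilityTheory.iIndepFun_iff_measure_inter_preimage_eq_mul.1 hiid) s
        (sets := fun _ => A) (fun i _ => hAmeas)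
    have hsum : (∑' i, P (E i)) = ⊤ := by
      simp_rw [hPE]
      exact ENNReal.tsum_const_eq_top_of_ne_zero hμA.ne'
    have h1 := ProbabilityTheory.measure_limsup_eq_one hEmeas hindep hsum
    have hae : ∀ᵐ ω ∂P, ω ∈ limsup E atTop := by
      rw [ae_iff]
      have hmeas : MeasurableSet (limsup E atTop) :=
        MeasurableSet.measurableSet_limsup (fun i => hEmeas i)
      have : {ω | ¬ ω ∈ limsup E atTop} = (limsup E atTop)ᶜ := rfl
      rw [this, measure_compl hmeas (measure_ne_top P _), h1, measure_univ, tsub_self]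
    filter_upwards [hae] with ω hω
    rw [Filter.mem_limsup_iff_frequently_mem] at hω
    obtain ⟨i, hi⟩ := hω.exists
    rw [eventually_atTop]
    refine ⟨i, fun N hN => ?_⟩
    have hiN : i ∈ Finset.range (N + 1) := Finset.mem_range.2 (by omega)
    calc t < g (X i ω) := hi
      _ = f (X i ω) * φ (X i ω) := mul_comm _ _
      _ ≤ _ := Finset.le_sup' (fun i => f (X i ω) * φ (X i ω)) hiN
  have hcount : ∀ᵐ ω ∂P, ∀ k : ℕ, ∀ᶠ N in atTop,
      S - 1 / (k + 1) < (Finset.range (N + 1)).sup' (by simp)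
        (fun i => f (X i ω) * φ (X i ω)) := by
    rw [ae_all_iff]
    intro k
    refine key _ ?_
    have : (0 : ℝ) < 1 / (k + 1) := by positivity
    linarith
  filter_upwards [hcount] with ω hω
  rw [tendsto_order]
  constructor
  · intro b hb
    obtain ⟨k, hk⟩ := exists_nat_one_div_lt (sub_pos.2 hb)
    filter_upwards [hω k] with N hN
    have hk' : (1 : ℝ) / (k + 1) < S - b := by exact_mod_cast hk
    linarith
  · intro b hb
    refine Eventually.of_forall fun N => lt_of_le_of_lt ?_ hb
    refine Finset.sup'_le _ _ fun i _ => ?_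
    rw [mul_comm]
    exact hle _
end
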